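/- arXiv:2007.14784 — 5 statements merged into one kernel-verified Lean document; each statement's English description precedes it below -/
import Mathlib

section
/- (Lax-functorial stability theorem, disjunctivity part.) In the situation described in the context, assume moreover that α_{i0} is disjunctive (S ≠ T implies S^{α_{i0}} ∩ T^{α_{i0}} = ∅). Then for any two distinct objects S ≠ T of E = D_{i0}, the sets S^β and T^β (both subsets of Π_{i∈I} st(α_i)) are disjoint: S^β ∩ T^β = ∅. -/
open CategoryTheory

/-- A family of open dynamics `A_i = (α_i →^{ρ_i} h_i)` indexed by a nonempty set `I`:
engines `D i` (small categories), parameter sets `L i`, state carriers `X i` with the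
states of type `S` being `stS i S`, transitions `tr i d lam : X i → Set (X i)`,
clocks with instant carriers `H i`, instants of type `S` being `hS i S` and transition
functions `hmap i d`, and datations `rho i`, subject to the axioms of disjunctivity,
lax identity, lax composition, functoriality of the clocks and equivariance of the
datations. -/
structure DynFamily where
  I : Type
  nonemptyI : Nonempty I
  D : I → Cat.{0, 0}
  L : I → Type
  X : I → Type
  H : I → Type
  stS : ∀ i, D i → Set (X i)
  tr : ∀ i, ∀ {S T : D i}, (S ⟶ T) → L i → X i → Set (X i)
  hS : ∀ i, D i → Set (H i)
  hmap : ∀ i, ∀ {S T : D i}, (S ⟶ T) → H i → H i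
  rho : ∀ i, X i → H i
  stDisj : ∀ i, ∀ {S T : D i}, S ≠ T → stS i S ∩ stS i T = ∅
  laxId : ∀ i (S : D i) (lam : L i), ∀ a ∈ stS i S, tr i (𝟙 S) lam a ⊆ {a}
  laxComp : ∀ i, ∀ {S T U : D i} (d : S ⟶ T) (e : T ⟶ U) (lam : L i),
    ∀ a ∈ stS i S, tr i (d ≫ e) lam a ⊆ ⋃ b ∈ tr i d lam a, tr i e lam b
  trMem : ∀ i, ∀ {S T : D i} (d : S ⟶ T) (lam : L i), ∀ a ∈ stS i S,
    tr i d lam a ⊆ stS i T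
  hDisj : ∀ i, ∀ {S T : D i}, S ≠ T → hS i S ∩ hS i T = ∅
  hMem : ∀ i, ∀ {S T : D i} (d : S ⟶ T), ∀ t ∈ hS i S, hmap i d t ∈ hS i T
  hId : ∀ i (S : D i), ∀ t ∈ hS i S, hmap i (𝟙 S) t = t
  hComp : ∀ i, ∀ {S T U : D i} (d : S ⟶ T) (e : T ⟶ U),
    ∀ t ∈ hS i S, hmap i (d ≫ e) t = hmap i e (hmap i d t)
  rhoMem : ∀ i (S : D i), ∀ a ∈ stS i S, rho i a ∈ hS i S
  rhoNat : ∀ i, ∀ {S T : D i} (d : S ⟶ T) (lam : L i),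
    ∀ a ∈ stS i S, ∀ b ∈ tr i d lam a, rho i b = hmap i d (rho i a)

/-- The anteriority preorder on the instants of the `i`-th clock:
`s ≤ t` iff some arrow `e` of `D i` sends the instant `s` to `t`. -/
def DynFamily.ante (F : DynFamily) (i : F.I) (s t : F.H i) : Prop :=
  ∃ (S T : F.D i) (e : S ⟶ T), s ∈ F.hS i S ∧ F.hmap i e s = t

/-- `σ` (a partial function on instants, encoded via `Option`) is the outgoing part of a
realization of the `i`-th dynamic with parametric part `lam`. -/
def DynFamily.IsRealization (F : DynFamily) (i : F.I) (lam : F.L i)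
    (σ : F.H i → Option (F.X i)) : Prop :=
  (∀ t a, σ t = some a → ∃ S : F.D i, t ∈ F.hS i S) ∧
  (∀ t a, σ t = some a → F.rho i a = t) ∧
  (∀ (S : F.D i), ∀ t ∈ F.hS i S, ∀ a, σ t = some a → a ∈ F.stS i S) ∧
  (∀ ⦃S T : F.D i⦄ (d : S ⟶ T), ∀ t ∈ F.hS i S, ∀ b, σ (F.hmap i d t) = some b →
    ∃ a, σ t = some a ∧ b ∈ F.tr i d lam a)

/-- `σ` passes through the state `a` : `σ ▷ a` iff `σ(ρ_i(a)) = a`. -/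
def DynFamily.Pass (F : DynFamily) (i : F.I) (σ : F.H i → Option (F.X i)) (a : F.X i) : Prop :=
  σ (F.rho i a) = some a

/-- An interaction for a family of open dynamics: an interaction request `R` (a set of
`I`-families of pairs (outgoing realization, parameter value)), a conductor `i0` and a
synchronization `(Δ_i, δ_i) : h_{i0} ⇝ h_i`, each `δ_i` being compatible with `Δ_i` and
monotone (increasing or decreasing) for the anteriority preorders, with `Δ_{i0}` and
`δ_{i0}` the identities. -/
structure InteractionCtx (F : DynFamily) where
  R : Set (∀ i, (F.H i → Option (F.X i)) × F.L i)
  i0 : F.I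
  Δ : ∀ i, F.D i0 → F.D i
  δ : ∀ i, F.H i0 → F.H i
  δMem : ∀ i (S : F.D i0), ∀ t ∈ F.hS i0 S, δ i t ∈ F.hS i (Δ i S)
  δMono : ∀ i, (∀ s t, F.ante i0 s t → F.ante i (δ i s) (δ i t)) ∨
               (∀ s t, F.ante i0 s t → F.ante i (δ i t) (δ i s))
  ΔId : ∀ S : F.D i0, Δ i0 S = S
  δId : ∀ t, δ i0 t = t

/-- The coherent part `Ř` of the interaction request: those families of the request in
which each `σ_i` is an outgoing realization of `A_i` for the parameter value `λ_i`. -/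
def InteractionCtx.Rcheck {F : DynFamily} (C : InteractionCtx F) :
    Set (∀ i, (F.H i → Option (F.X i)) × F.L i) :=
  {q | q ∈ C.R ∧ ∀ i, F.IsRealization i (q i).2 (q i).1}

/-- The parametric set `M = Im(br(Ř))` of the global dynamic. -/
def InteractionCtx.Mset {F : DynFamily} (C : InteractionCtx F) : Set (∀ i, F.L i) :=
  {μ | ∃ σf : ∀ i, F.H i → Option (F.X i), (fun i => (σf i, μ i)) ∈ C.Rcheck}

/-- The set `S^β` of states of type `S` of the global dynamic `β`. -/
def InteractionCtx.Sbeta {F : DynFamily} (C : InteractionCtx F) (S : F.D C.i0) :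
    Set (∀ i, F.X i) :=
  {a | (∀ i, a i ∈ F.stS i (C.Δ i S)) ∧ ∀ i, F.rho i (a i) = C.δ i (F.rho C.i0 (a C.i0))}

/-- The transition `d^β_μ` of the global dynamic `β`. -/
def InteractionCtx.dbeta {F : DynFamily} (C : InteractionCtx F) {S T : F.D C.i0}
    (d : S ⟶ T) (μ : ∀ i, F.L i) (a : ∀ i, F.X i) : Set (∀ i, F.X i) :=
  {b | b ∈ C.Sbeta T ∧ F.rho C.i0 (b C.i0) = F.hmap C.i0 d (F.rho C.i0 (a C.i0)) ∧
      ∃ σf : ∀ i, F.H i → Option (F.X i), (fun i => (σf i, μ i)) ∈ C.Rcheck ∧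
        ∀ i, F.Pass i (σf i) (a i) ∧ F.Pass i (σf i) (b i)}

theorem InteractionCtx.apply_conductor_mem_stS {F : DynFamily} (C : InteractionCtx F)
    {S : F.D C.i0} {a : ∀ i, F.X i} (ha : a ∈ C.Sbeta S) : a C.i0 ∈ F.stS C.i0 S :=
  C.ΔId S ▸ ha.1 C.i0

theorem stmt_1_general (F : DynFamily) (C : InteractionCtx F) :
    ∀ S T : F.D C.i0, S ≠ T → C.Sbeta S ∩ C.Sbeta T = ∅ := by
  intro S T hST
  refine Set.eq_empty_iff_forall_notMem.2 fun a ⟨haS, haT⟩ => ?_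
  have hmem : a C.i0 ∈ F.stS C.i0 S ∩ F.stS C.i0 T :=
    ⟨C.apply_conductor_mem_stS haS, C.apply_conductor_mem_stS haT⟩
  rwa [F.stDisj C.i0 hST] at hmem

/-- Lax-functorial stability theorem, disjunctivity part:
since `α_{i0}` is disjunctive, for any two distinct objects `S ≠ T` of `E = D_{i0}`,
the sets `S^β` and `T^β` (subsets of `Π_{i ∈ I} st(α_i)`) are disjoint. -/
theorem stmt_1 (F : DynFamily) (C : InteractionCtx F) (hadm : C.Rcheck.Nonempty) :
    ∀ S T : F.D C.i0, S ≠ T → C.Sbeta S ∩ C.Sbeta T = ∅ :=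
  stmt_1_general F C
end

section
/- (Lax-functorial stability theorem, lax identity part.) In the situation described in the context, for every object S of E = D_{i0}, every μ ∈ M and every a ∈ S^β, every element of (Id_S)^β_μ(a) is equal to a; that is, (Id_S)^β_μ ⊆ Id_{S^β}. -/
/-! An identity step of the global dynamic keeps the conductor's instant, hence, through the
synchronization, the instant of every component. A realization is a function of the instant,
so the common realization passing through the components of `a` and `b` forces `a = b`. -/

open CategoryTheory

theorem DynFamily.Pass.eq_of_rho_eq {F : DynFamily} {i : F.I} {σ : F.H i → Option (F.X i)}
    {a b : F.X i} (ha : F.Pass i σ a) (hb : F.Pass i σ b) (h : F.rho i a = F.rho i b) :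
    a = b := by
  unfold DynFamily.Pass at ha hb
  rw [h, hb] at ha
  exact (Option.some.inj ha).symm

namespace InteractionCtx

variable {F : DynFamily} (C : InteractionCtx F)

theorem conductor_mem_stS_of_mem_Sbeta {S : F.D C.i0} {a : ∀ i, F.X i} (ha : a ∈ C.Sbeta S) :
    a C.i0 ∈ F.stS C.i0 S :=
  C.ΔId S ▸ ha.1 C.i0

theorem rho_eq_of_mem_Sbeta {S T : F.D C.i0} {a b : ∀ i, F.X i} (ha : a ∈ C.Sbeta S)
    (hb : b ∈ C.Sbeta T) (h : F.rho C.i0 (a C.i0) = F.rho C.i0 (b C.i0)) (i : F.I) :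
    F.rho i (a i) = F.rho i (b i) := by
  rw [ha.2 i, hb.2 i, h]

theorem rho_conductor_eq_of_mem_dbeta_id {S : F.D C.i0} {μ : ∀ i, F.L i} {a b : ∀ i, F.X i}
    (ha : a ∈ C.Sbeta S) (hb : b ∈ C.dbeta (𝟙 S) μ a) :
    F.rho C.i0 (a C.i0) = F.rho C.i0 (b C.i0) := by
  rw [hb.2.1, F.hId _ _ _ (F.rhoMem _ _ _ (C.conductor_mem_stS_of_mem_Sbeta ha))]

end InteractionCtx

theorem stmt_2_general (F : DynFamily) (C : InteractionCtx F) :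
    ∀ (S : F.D C.i0) (μ : ∀ i, F.L i), μ ∈ C.Mset →
      ∀ a ∈ C.Sbeta S, ∀ b ∈ C.dbeta (𝟙 S) μ a, b = a := by
  intro S μ _ a ha b hb
  have hrho := C.rho_conductor_eq_of_mem_dbeta_id ha hb
  obtain ⟨hbS, -, σf, -, hpass⟩ := hb
  funext i
  exact ((hpass i).1.eq_of_rho_eq (hpass i).2 (C.rho_eq_of_mem_Sbeta ha hbS hrho i)).symm

/-- Lax-functorial stability theorem, lax identity part:
for every object `S` of `E = D_{i0}`, every `μ ∈ M` and every `a ∈ S^β`,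
every element of `(Id_S)^β_μ(a)` is equal to `a`; that is, `(Id_S)^β_μ ⊆ Id_{S^β}`. -/
theorem stmt_2 (F : DynFamily) (C : InteractionCtx F) (hadm : C.Rcheck.Nonempty) :
    ∀ (S : F.D C.i0) (μ : ∀ i, F.L i), μ ∈ C.Mset →
      ∀ a ∈ C.Sbeta S, ∀ b ∈ C.dbeta (𝟙 S) μ a, b = a :=
  stmt_2_general F C
end

section
/- Let I be an index set, Z = (Z_i)_{i∈I} and L = (L_i)_{i∈I} families of sets, and R a multiple binary relation with graph |R| ⊆ Π_{i∈I}(Z_i × L_i), regarded as an I-multiple relation in the product context (Z_i × L_i)_{i∈I}. Let R̲ be the projection of R onto the context Z, i.e. the I-multiple relation with graph {(σ_i)_{i∈I} ∈ Π_{i∈I} Z_i : ∃(λ_i)_{i∈I} ∈ Π_{i∈I} L_i, ((σ_i, λ_i))_{i∈I} ∈ |R|}. Then every subset K ⊆ I that is non-splittable for R̲ is non-splittable for R; that is, the connectivity structure of R̲ is contained in the connectivity structure of R: 𝒦_{R̲} ⊆ 𝒦_R. -/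
/-- The restriction `R|K` of an `I`-multiple relation with graph `G` in the context `E`
to a subset `K ⊆ I` : the image of `G` under restriction of families to `K`. -/
def mres {I : Type*} {E : I → Type*} (G : Set (∀ i, E i)) (K : Set I) :
    Set (∀ k : K, E k) :=
  (fun (x : ∀ i, E i) (k : K) => x k.1) '' G

/-- The gluing `R1 ⊗ R2` of a `K1`-relation and a `K2`-relation: the `(K1 ∪ K2)`-relation
whose graph consists of the families whose restrictions to `K1` and to `K2` belong to the
respective graphs. -/
def mglue {I : Type*} {E : I → Type*} {K1 K2 : Set I}
    (G1 : Set (∀ k : K1, E k)) (G2 : Set (∀ k : K2, E k)) :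
    Set (∀ k : ↥(K1 ∪ K2), E k) :=
  {x | (fun k : K1 => x ⟨k.1, Set.mem_union_left K2 k.2⟩) ∈ G1 ∧
       (fun k : K2 => x ⟨k.1, Set.mem_union_right K1 k.2⟩) ∈ G2}

/-- `K` is non-splittable for the `I`-multiple relation with graph `G` : there is no
partition `K = K1 ⊔ K2` into two nonempty disjoint subsets with `R|K = R|K1 ⊗ R|K2`.
The connectivity structure `𝒦_R` is the set of non-splittable subsets of the arity. -/
def NonSplittable {I : Type*} {E : I → Type*} (G : Set (∀ i, E i)) (K : Set I) : Prop :=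
  ¬ ∃ K1 K2 : Set I, K1 ∪ K2 = K ∧ K1 ∩ K2 = ∅ ∧ K1.Nonempty ∧ K2.Nonempty ∧
      mres G (K1 ∪ K2) = mglue (mres G K1) (mres G K2)

/-- The projection `R̲` of a multiple binary relation `R` (with incoming context `Z` and
outgoing context `L`) onto the context `Z`. -/
def mbrProj {I : Type*} {Z L : I → Type*} (R : Set (∀ i, Z i × L i)) :
    Set (∀ i, Z i) :=
  {σ | ∃ lam : ∀ i, L i, (fun i => (σ i, lam i)) ∈ R}

/-! Projection onto the incoming context commutes with restriction, and, for disjoint arities,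
with gluing. Hence projecting a splitting `R|K = R|K1 ⊗ R|K2` of `R` yields a splitting of `R̲`
along the same partition. -/

section

variable {I : Type*} {Z L : I → Type*}

theorem mres_mbrProj (R : Set (∀ i, Z i × L i)) (K : Set I) :
    mres (mbrProj R) K = mbrProj (mres R K) := by
  ext σ
  constructor
  · rintro ⟨σ, ⟨lam, hR⟩, rfl⟩
    exact ⟨fun k => lam k, _, hR, rfl⟩
  · rintro ⟨lam, p, hp, hpσ⟩
    exact ⟨fun i => (p i).1, ⟨fun i => (p i).2, hp⟩,
      funext fun k => congrArg Prod.fst (congrFun hpσ k)⟩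

/-- Outgoing components chosen separately on `K1` and on `K2` combine into one family
because the two index sets do not overlap. -/
theorem mbrProj_mglue {K1 K2 : Set I} (hd : Disjoint K1 K2)
    (G1 : Set (∀ k : K1, Z k × L k)) (G2 : Set (∀ k : K2, Z k × L k)) :
    mbrProj (mglue (E := fun i => Z i × L i) G1 G2) =
      mglue (mbrProj G1) (mbrProj G2) := by
  ext σ
  constructor
  · rintro ⟨lam, h1, h2⟩
    exact ⟨⟨_, h1⟩, ⟨_, h2⟩⟩
  · rintro ⟨⟨lam1, h1⟩, ⟨lam2, h2⟩⟩
    classical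
    refine ⟨fun k => if hk : k.1 ∈ K1 then lam1 ⟨k, hk⟩ else lam2 ⟨k, k.2.resolve_left hk⟩,
      ?_, ?_⟩
    · simpa using h1
    · have hK2 : ∀ k : K2, k.1 ∉ K1 := fun k => hd.notMem_of_mem_right k.2
      simpa [hK2] using h2

end

/-- every subset `K ⊆ I` that is non-splittable for the projection `R̲` of
a multiple binary relation `R` is non-splittable for `R` itself; that is,
`𝒦_{R̲} ⊆ 𝒦_R`. -/
theorem stmt_4 {I : Type*} {Z L : I → Type*}
    (R : Set (∀ i, Z i × L i)) (K : Set I)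
    (h : NonSplittable (mbrProj R) K) :
    NonSplittable R K := by
  rintro ⟨K1, K2, hu, hd, hn1, hn2, hsplit⟩
  refine h ⟨K1, K2, hu, hd, hn1, hn2, ?_⟩
  rw [mres_mbrProj, hsplit, mbrProj_mglue (Set.disjoint_iff_inter_eq_empty.2 hd),
    mres_mbrProj, mres_mbrProj]
end

section
/- Consider the open dynamic 𝕐 on the monoid (ℝ≥0, +) (viewed as a one-object category) with set of states st(𝕐) = ℝ≥0 × ℝ, clock the existential clock ξ with instants st(ξ) = ℝ≥0 and d^ξ(t) = t + d for all t, d ∈ ℝ≥0, datation τ(t, a) = t, and transitions d^α(t, a) = {t + d} × [a − d, a + d] for every duration d ∈ ℝ≥0. A partial function σ : ℝ≥0 ⇸ ℝ≥0 × ℝ with domain D = Def_σ is a realization of 𝕐 (i.e. satisfies: (1) the first component of σ(t) equals t for every t ∈ D, and (3) for all t, d ∈ ℝ≥0, if t + d ∈ D then t ∈ D and σ(t + d) ∈ {t + d} × [snd(σ(t)) − d, snd(σ(t)) + d]) if and only if D is a downward-closed subset of ℝ≥0 — hence of the form ∅, [0, a], [0, a) with a ∈ ℝ≥0, or [0, ∞)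 — and the function f : D → ℝ, f(t) = snd(σ(t)), is 1-Lipschitz on D (|f(s) − f(t)| ≤ |s − t| for all s, t ∈ D) with σ(t) = (t, f(t)) for all t ∈ D. Thus the realizations of 𝕐 correspond exactly to the 1-Lipschitz real functions defined on initial segments of ℝ≥0. -/
/-!
Every pair `t ≤ s` in `ℝ≥0` is of the form `s = t + d`, so the transition condition says at
once that the domain is an initial segment and that the second component moves by at most `d`
over time `d`, i.e. is 1-Lipschitz; the first component is pinned down by the datation.
-/

open scoped NNReal

open Set

theorem isLowerSet_iff_forall_add_mem {α : Type*} [AddCommMonoid α] [PartialOrder α]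
    [CanonicallyOrderedAdd α] {D : Set α} :
    IsLowerSet D ↔ ∀ t d : α, t + d ∈ D → t ∈ D := by
  refine ⟨fun hD t d htd => hD le_self_add htd, fun h a b hba ha => ?_⟩
  obtain ⟨d, rfl⟩ := le_iff_exists_add.mp hba
  exact h b d ha

theorem lipschitzOnWith_one_iff_forall_add {D : Set ℝ≥0} {f : ℝ≥0 → ℝ} (hD : IsLowerSet D) :
    LipschitzOnWith 1 f D ↔ ∀ t d : ℝ≥0, t + d ∈ D → |f t - f (t + d)| ≤ d := by
  simp only [lipschitzOnWith_iff_dist_le_mul, NNReal.coe_one, one_mul, Real.dist_eq,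
    NNReal.dist_eq]
  refine ⟨fun h t d htd => by simpa using h t (hD le_self_add htd) _ htd, fun h s hs t ht => ?_⟩
  wlog hst : s ≤ t generalizing s t
  · rw [abs_sub_comm, abs_sub_comm (s : ℝ)]
    exact this t ht s hs (le_of_not_ge hst)
  obtain ⟨d, rfl⟩ := le_iff_exists_add.mp hst
  simpa using h s d ht

theorem forall_add_mem_Icc_iff {D : Set ℝ≥0} {f : ℝ≥0 → ℝ} :
    (∀ t d : ℝ≥0, t + d ∈ D → t ∈ D ∧ f (t + d) ∈ Icc (f t - d) (f t + d)) ↔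
      IsLowerSet D ∧ LipschitzOnWith 1 f D := by
  simp only [← mem_Icc_iff_abs_le]
  constructor
  · intro h
    have hD : IsLowerSet D := isLowerSet_iff_forall_add_mem.2 fun t d htd => (h t d htd).1
    exact ⟨hD, (lipschitzOnWith_one_iff_forall_add hD).2 fun t d htd => (h t d htd).2⟩
  · rintro ⟨hD, hf⟩ t d htd
    exact ⟨isLowerSet_iff_forall_add_mem.1 hD t d htd,
      (lipschitzOnWith_one_iff_forall_add hD).1 hf t d htd⟩

/-- realizations of the open dynamic `𝕐` on the monoid `(ℝ≥0, +)`.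
A partial function `σ : ℝ≥0 ⇸ ℝ≥0 × ℝ`, encoded by its domain `Dom` and a total function
`g` (only the values of `g` on `Dom` matter), is a realization of `𝕐` — i.e. satisfies
(1) the first component of `σ(t)` equals `t` for every `t ∈ Dom`, and
(3) for all `t, d ∈ ℝ≥0`, if `t + d ∈ Dom` then `t ∈ Dom` and
    `σ(t + d) ∈ {t + d} × [snd (σ t) − d, snd (σ t) + d]` —
if and only if `Dom` is a downward-closed subset of `ℝ≥0` (hence of the form `∅`,
`[0, a]`, `[0, a)` or `[0, ∞)`) and the second-component function is 1-Lipschitz on `Dom`,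
with `σ(t) = (t, snd (σ t))` on `Dom`.  Thus the realizations of `𝕐` correspond exactly
to the 1-Lipschitz real functions defined on initial segments of `ℝ≥0`. -/
theorem stmt_10 (Dom : Set ℝ≥0) (g : ℝ≥0 → ℝ≥0 × ℝ) :
    ((∀ t ∈ Dom, (g t).1 = t) ∧
      (∀ t d : ℝ≥0, t + d ∈ Dom → t ∈ Dom ∧
        g (t + d) ∈ ({t + d} : Set ℝ≥0) ×ˢ
          Set.Icc ((g t).2 - (d : ℝ)) ((g t).2 + (d : ℝ))))
    ↔
    ((∀ s t : ℝ≥0, s ≤ t → t ∈ Dom → s ∈ Dom) ∧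
      (∀ s ∈ Dom, ∀ t ∈ Dom, |(g s).2 - (g t).2| ≤ |(s : ℝ) - (t : ℝ)|) ∧
      (∀ t ∈ Dom, g t = (t, (g t).2))) := by
  have hfst : (∀ t ∈ Dom, (g t).1 = t) ↔ ∀ t ∈ Dom, g t = (t, (g t).2) := by
    simp [Prod.ext_iff]
  have hlip : LipschitzOnWith 1 (fun t => (g t).2) Dom ↔
      ∀ s ∈ Dom, ∀ t ∈ Dom, |(g s).2 - (g t).2| ≤ |(s : ℝ) - (t : ℝ)| := by
    simp [lipschitzOnWith_iff_dist_le_mul, Real.dist_eq, NNReal.dist_eq]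
  have htrans (h1 : ∀ t ∈ Dom, (g t).1 = t) :
      (∀ t d : ℝ≥0, t + d ∈ Dom → t ∈ Dom ∧
        g (t + d) ∈ ({t + d} : Set ℝ≥0) ×ˢ Icc ((g t).2 - (d : ℝ)) ((g t).2 + (d : ℝ))) ↔
      ∀ t d : ℝ≥0, t + d ∈ Dom → t ∈ Dom ∧
        (g (t + d)).2 ∈ Icc ((g t).2 - (d : ℝ)) ((g t).2 + (d : ℝ)) :=
    forall₂_congr fun t d => imp_congr_right fun htd => by simp [mem_prod, h1 _ htd]
  constructor
  · rintro ⟨h1, h3⟩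
    obtain ⟨hD, hf⟩ := forall_add_mem_Icc_iff.1 ((htrans h1).1 h3)
    exact ⟨fun s t hst ht => hD hst ht, hlip.1 hf, hfst.1 h1⟩
  · rintro ⟨hD, hf, hg⟩
    have h1 := hfst.2 hg
    exact ⟨h1, (htrans h1).2 <|
      forall_add_mem_Icc_iff.2 ⟨fun t s hst ht => hD s t hst ht, hlip.2 hf⟩⟩
end

section
/- Let Z be the set of partial functions σ : {t0, t1} ⇸ {0,1} whose domain is ∅, {t0}, or {t0, t1} (this is the set of outgoing realizations of the one-step deterministic cell Υ), and let L = {0,1}^{{0,1}} be the set of all functions {0,1} → {0,1}. Call a pair (σ, λ) ∈ Z × L coherent if, whenever σ has domain {t0, t1}, σ(t1) = λ(σ(t0)). Let I = {1, 2, 3} and let Q be the multiple binary relation in the context given by Z_i = Z and L_i = L for all i, with graph |Q| = {((σ_i, λ_i))_{i∈I} ∈ (Z × L)^3 : λ_i(0) = 1 for at least one i ∈ I}. Let Ř be the coherent part of Q (those elements of |Q| in which each of the three pairs (σ_i, λ_i) is coherent), and let Ř̲ be the projection of Ř onto Z^3. Then the connectivity structure 𝒦_{Ř̲} and the connectivity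 structure 𝒦_{Ř} are both equal to the integral borromean structure on I: a subset K ⊆ {1,2,3} is non-splittable if and only if K is not one of the three two-element subsets {1,2}, {1,3}, {2,3} (i.e. the connected subsets are ∅, the singletons, and {1,2,3}). -/
/-- Outgoing realizations of the one-step deterministic cell `Υ` : partial functions
`σ : {t0, t1} ⇸ {0, 1}` (instants encoded by `Bool`, `false = t0`, `true = t1`; values
encoded by `Bool`, `false = 0`, `true = 1`) whose domain is `∅`, `{t0}` or `{t0, t1}`,
i.e. such that if `σ` is defined at `t1` it is defined at `t0`. -/
def ZUpsilon : Type :=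
  {σ : Bool → Option Bool // σ true ≠ none → σ false ≠ none}

/-- Parameter values of `Υ` : the functions `{0,1} → {0,1}`. -/
def LUpsilon : Type := Bool → Bool

/-- The pair `(σ, λ)` is coherent: whenever `σ` has domain `{t0, t1}`,
`σ(t1) = λ(σ(t0))`. -/
def Coherent (p : ZUpsilon × LUpsilon) : Prop :=
  ∀ a b : Bool, p.1.1 false = some a → p.1.1 true = some b → b = p.2 a

/-- The borromean interaction request `Q` : families `((σ_i, λ_i))_{i ∈ I}`,
`I = {1, 2, 3}`, with `λ_i(0) = 1` for at least one `i`. -/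
def borromeanQ : Set (Fin 3 → ZUpsilon × LUpsilon) :=
  {q | ∃ i, (q i).2 false = true}

/-- The coherent part `Ř` of the borromean request: elements of `|Q|` all of whose three
pairs are coherent. -/
def borromeanRcheck : Set (Fin 3 → ZUpsilon × LUpsilon) :=
  {q | q ∈ borromeanQ ∧ ∀ i, Coherent (q i)}

/-- The projection `Ř̲` of `Ř` onto `Z^3`. -/
def borromeanProj : Set (Fin 3 → ZUpsilon) :=
  {σ | ∃ lam : Fin 3 → LUpsilon, (fun i => (σ i, lam i)) ∈ borromeanRcheck}

/-!
Both relations have the shape "every coordinate is admissible, and at least one coordinate is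
good", with an admissible good value and an admissible bad value at every coordinate. Dropping a
coordinate `m` makes the existential condition vacuous (put a good value at `m`), so every
restriction to a proper subset is a product, and any proper subset with two elements splits.
The full index set does not split: the family that is bad at every coordinate lies in the
product of the restrictions but not in the relation. For `Ř` a bad pair is `(σ, λ)` with
`λ(0) = 0`; for `Ř̲` it is the realization `σ(t0) = σ(t1) = 0`, which forces `λ(0) = 0`.
-/

open Set

section Borromean

variable {ι : Type*}

def borromean {E : ι → Type*} (A B : ∀ i, Set (E i)) : Set (∀ i, E i) :=
  {x | (∃ i, x i ∈ B i) ∧ ∀ i, x i ∈ A i}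

theorem nonSplittable_of_subsingleton {E : ι → Type*} (G : Set (∀ i, E i)) {K : Set ι}
    (hK : K.Subsingleton) : NonSplittable G K := by
  rintro ⟨K1, K2, rfl, hdisj, ⟨a, ha⟩, ⟨b, hb⟩, -⟩
  have hab : a = b := hK (mem_union_left _ ha) (mem_union_right _ hb)
  subst hab
  exact (hdisj ▸ ⟨ha, hb⟩ : a ∈ (∅ : Set ι))

variable {E : ι → Type*} {A B : ∀ i, Set (E i)}

theorem mres_borromean_of_notMem (hAB : ∀ i, (A i ∩ B i).Nonempty) {K : Set ι} {m : ι}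
    (hm : m ∉ K) : mres (borromean A B) K = univ.pi fun k : K => A k := by
  classical
  ext y
  constructor
  · rintro ⟨x, ⟨-, hx⟩, rfl⟩ k -
    exact hx k
  · intro hy
    choose c hcA hcB using hAB
    refine ⟨fun i => if h : i ∈ K then y ⟨i, h⟩ else c i, ⟨⟨m, ?_⟩, fun i => ?_⟩,
      ?_⟩
    · simpa [hm] using hcB m
    · by_cases h : i ∈ K
      · simpa [h] using hy ⟨i, h⟩ (mem_univ _)
      · simpa [h] using hcA i
    · funext k
      simp [k.2]

theorem mglue_pi (K1 K2 : Set ι) :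
    mglue (univ.pi fun k : K1 => A k) (univ.pi fun k : K2 => A k) =
      univ.pi fun k : ↥(K1 ∪ K2) => A k := by
  ext x
  simp only [mglue, mem_ofPred_eq, mem_pi, mem_univ, forall_const, Subtype.forall, mem_union]
  constructor
  · rintro ⟨h1, h2⟩ k (hk | hk)
    exacts [h1 k hk, h2 k hk]
  · intro h
    exact ⟨fun k hk => h k (Or.inl hk), fun k hk => h k (Or.inr hk)⟩

theorem not_nonSplittable_borromean (hAB : ∀ i, (A i ∩ B i).Nonempty) {K : Set ι}
    (hK : K.Nontrivial) (hKu : K ≠ univ) : ¬NonSplittable (borromean A B) K := by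
  obtain ⟨m, hm⟩ := (ne_univ_iff_exists_notMem K).1 hKu
  obtain ⟨a, ha, b, hb, hab⟩ := hK
  have hsplit : {a} ∪ K \ {a} = K := union_sdiff_cancel (singleton_subset_iff.2 ha)
  refine not_not.2 ⟨{a}, K \ {a}, hsplit, inter_sdiff_self _ _, singleton_nonempty a,
    ⟨b, hb, hab.symm⟩, ?_⟩
  rw [mres_borromean_of_notMem hAB (hsplit.symm ▸ hm),
    mres_borromean_of_notMem hAB
      (fun h : m ∈ ({a} : Set ι) => hm (eq_of_mem_singleton h ▸ ha)),
    mres_borromean_of_notMem hAB (fun h : m ∈ K \ {a} => hm h.1), mglue_pi]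

theorem nonSplittable_borromean_univ (hAB : ∀ i, (A i ∩ B i).Nonempty)
    (hAnB : ∀ i, (A i \ B i).Nonempty) : NonSplittable (borromean A B) univ := by
  rintro ⟨K1, K2, hu, hdisj, ⟨a, ha⟩, ⟨b, hb⟩, heq⟩
  have hb1 : b ∉ K1 := fun h => (hdisj ▸ ⟨h, hb⟩ : b ∈ (∅ : Set ι))
  have ha2 : a ∉ K2 := fun h => (hdisj ▸ ⟨ha, h⟩ : a ∈ (∅ : Set ι))
  rw [mres_borromean_of_notMem hAB hb1, mres_borromean_of_notMem hAB ha2, mglue_pi] at heq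
  choose c hcA hcB using hAnB
  have hc : (fun k : ↥(K1 ∪ K2) => c k) ∈ mres (borromean A B) (K1 ∪ K2) :=
    heq ▸ fun k _ => hcA k
  obtain ⟨x, ⟨⟨i, hi⟩, -⟩, hx⟩ := hc
  have hxi : x i = c i := congrFun hx ⟨i, hu ▸ mem_univ i⟩
  exact hcB i (hxi ▸ hi)

theorem nonSplittable_borromean_iff (hAB : ∀ i, (A i ∩ B i).Nonempty)
    (hAnB : ∀ i, (A i \ B i).Nonempty) {K : Set ι} :
    NonSplittable (borromean A B) K ↔ K.Subsingleton ∨ K = univ := by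
  constructor
  · intro hK
    by_contra! h
    exact not_nonSplittable_borromean hAB h.1 h.2 hK
  · rintro (hK | rfl)
    exacts [nonSplittable_of_subsingleton _ hK, nonSplittable_borromean_univ hAB hAnB]

theorem setOf_exists_mk_mem_borromean {Z L : ι → Type*} (A B : ∀ i, Set (Z i × L i)) :
    {σ : ∀ i, Z i | ∃ lam : ∀ i, L i, (fun i => (σ i, lam i)) ∈ borromean A B} =
      borromean (fun i => Prod.fst '' A i) (fun i => Prod.fst '' (A i ∩ B i)) := by
  classical
  ext σ
  constructor
  · rintro ⟨lam, ⟨i, hi⟩, hA⟩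
    exact ⟨⟨i, _, ⟨hA i, hi⟩, rfl⟩, fun j => ⟨_, hA j, rfl⟩⟩
  · rintro ⟨⟨i, ⟨z, l⟩, ⟨hpA, hpB⟩, hz⟩, hA⟩
    obtain rfl : z = σ i := hz
    choose q hqA hq using hA
    refine ⟨Function.update (fun j => (q j).2) i l, ⟨i, by simpa using hpB⟩, fun j => ?_⟩
    rcases eq_or_ne j i with rfl | hji
    · simpa using hpA
    · simpa [hji, ← hq j] using hqA j

end Borromean

namespace ZUpsilon

def undef : ZUpsilon := ⟨fun _ => none, fun h => h⟩

def constZero : ZUpsilon := ⟨fun _ => some false, fun _ => Option.some_ne_none false⟩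

theorem coherent_undef (l : LUpsilon) : Coherent (undef, l) := by
  intro a b h
  cases h

theorem coherent_constZero_iff (l : LUpsilon) : Coherent (constZero, l) ↔ l false = false := by
  constructor
  · intro h
    exact (h false false rfl rfl).symm
  · intro h a b ha hb
    cases Option.some.inj ha
    cases Option.some.inj hb
    exact h.symm

end ZUpsilon

open ZUpsilon

theorem borromeanRcheck_eq :
    borromeanRcheck = borromean (fun _ => {p | Coherent p}) (fun _ => {p | p.2 false = true}) :=
  rfl

theorem coherent_inter_nonempty :
    ({p | Coherent p} ∩ {p : ZUpsilon × LUpsilon | p.2 false = true}).Nonempty :=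
  ⟨(undef, fun _ => true), coherent_undef _, rfl⟩

theorem coherent_diff_nonempty :
    ({p | Coherent p} \ {p : ZUpsilon × LUpsilon | p.2 false = true}).Nonempty :=
  ⟨(undef, fun _ => false), coherent_undef _, Bool.false_ne_true⟩

theorem nonSplittable_borromeanRcheck_iff {K : Set (Fin 3)} :
    NonSplittable borromeanRcheck K ↔ K.Subsingleton ∨ K = univ :=
  nonSplittable_borromean_iff (fun _ => coherent_inter_nonempty) (fun _ => coherent_diff_nonempty)

theorem borromeanProj_eq :
    borromeanProj = borromean (fun _ => Prod.fst '' {p | Coherent p})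
      (fun _ => Prod.fst '' ({p | Coherent p} ∩ {p | p.2 false = true})) := by
  unfold borromeanProj
  rw [borromeanRcheck_eq]
  exact setOf_exists_mk_mem_borromean (Z := fun _ => ZUpsilon) (L := fun _ => LUpsilon) _ _

theorem nonSplittable_borromeanProj_iff {K : Set (Fin 3)} :
    NonSplittable borromeanProj K ↔ K.Subsingleton ∨ K = univ := by
  have hgood : (Prod.fst '' {p | Coherent p} ∩
      Prod.fst '' ({p | Coherent p} ∩ {p | p.2 false = true})).Nonempty :=
    (coherent_inter_nonempty.image Prod.fst).mono
      (subset_inter (image_mono inter_subset_left) subset_rfl)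
  have hbad : (Prod.fst '' {p | Coherent p} \
      Prod.fst '' ({p | Coherent p} ∩ {p | p.2 false = true})).Nonempty := by
    refine ⟨constZero, ⟨(constZero, fun _ => false), (coherent_constZero_iff _).2 rfl, rfl⟩,
      ?_⟩
    rintro ⟨⟨σ, l⟩, ⟨hcoh, hl⟩, rfl⟩
    exact Bool.false_ne_true (((coherent_constZero_iff l).1 hcoh).symm.trans hl)
  rw [borromeanProj_eq]
  exact nonSplittable_borromean_iff (fun _ => hgood) (fun _ => hbad)

theorem subsingleton_or_eq_univ_iff_not_pair_fin_three (K : Set (Fin 3)) :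
    K.Subsingleton ∨ K = univ ↔ ¬(K = {0, 1} ∨ K = {0, 2} ∨ K = {1, 2}) := by
  obtain ⟨s, rfl⟩ := K.toFinite.exists_finset_coe
  simp only [Set.Subsingleton, Finset.mem_coe, ← Finset.coe_univ, ← Finset.coe_insert,
    ← Finset.coe_singleton, Finset.coe_inj]
  revert s
  decide

/-- both the connectivity structure of `Ř̲` and that of `Ř` are the
integral borromean structure on `I = {1,2,3}` : a subset `K` is non-splittable iff it is
not one of the three two-element subsets; the connected subsets are `∅`, the singletons
and `{1,2,3}`. -/
theorem stmt_11 (K : Set (Fin 3)) :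
    (NonSplittable borromeanProj K ↔
      ¬(K = {0, 1} ∨ K = {0, 2} ∨ K = {1, 2})) ∧
    (NonSplittable borromeanRcheck K ↔
      ¬(K = {0, 1} ∨ K = {0, 2} ∨ K = {1, 2})) :=
  ⟨nonSplittable_borromeanProj_iff.trans (subsingleton_or_eq_univ_iff_not_pair_fin_three K),
    nonSplittable_borromeanRcheck_iff.trans (subsingleton_or_eq_univ_iff_not_pair_fin_three K)⟩
end
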